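/- arXiv:1206.4740 — 5 statements merged into one kernel-verified Lean document; each statement's English description precedes it below -/
import Mathlib

section
/- Let K be a field with algebraic closure K̄, let d ≥ 1, and let p, q ∈ K[X₁,…,X_d] with q ≠ 0. Let q = c·q₁^{e₁}⋯q_m^{e_m} be the factorization of q into a unit c and pairwise non-associate irreducible polynomials q₁,…,q_m of K[X₁,…,X_d] with positive exponents e₁,…,e_m. Then the rational function f = p/q ∈ K(X₁,…,X_d) can be written as f = Σ_A p_A / ∏_{i∈A} q_i^{b_{A,i}}, where the sum ranges over subsets A ⊆ {1,…,m} such that (i) the polynomials q_i for i ∈ A have a common zero in K̄^d and (ii) the family (q_i)_{i∈A} is algebraically independent over K; here each p_A ∈ K[X₁,…,X_d] (possibly zero) and the b_{A,i} are positive integers (possibly greater than e_i). -/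
/-!
Strong induction on the set `A` of factors in a denominator `∏_{i ∈ A} q_i ^ b_i`.
If the `q_i`, `i ∈ A`, have no common zero in `K̄^d`, neither have the `q_i ^ b_i`, and the weak
Nullstellensatz gives `1 = ∑_{i ∈ A} h_i q_i ^ b_i`, which splits `1 / ∏ q_i ^ b_i` into fractions
whose denominators each miss one factor. If they have a common zero but are algebraically
dependent, then so are the `y_i = q_i ^ b_i`, since the `q_i` are algebraic over `K[y]`. A monomial
`y^α` of least degree in an annihilating polynomial gives `y^α = ∑_τ c_τ y^τ`, where each `τ`
exceeds `α` in some coordinate `i`; dividing by `∏ y_i ^ (α_i + 1)` cancels the factor `q_i` from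
the `τ`-th term. Otherwise `A` already has both properties required of a denominator.
-/

open MvPolynomial

theorem MvPolynomial.exists_sum_mul_eq_one_of_forall_exists_aeval_ne_zero {k L σ ι : Type*}
    [Field k] [Field L] [IsAlgClosed L] [Algebra k L] [Finite σ]
    {f : ι → MvPolynomial σ k} {A : Finset ι} (h : ∀ x : σ → L, ∃ i ∈ A, aeval x (f i) ≠ 0) :
    ∃ g : ι → MvPolynomial σ k, ∑ i ∈ A, g i * f i = 1 := by
  by_contra hne
  have hspan : Ideal.span (f '' A) ≠ ⊤ := fun htop =>
    hne ((Submodule.mem_span_image_finset_iff_exists_fun' _).1 ((Ideal.eq_top_iff_one _).1 htop))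
  obtain ⟨M, hM, hle⟩ := Ideal.exists_le_maximal _ hspan
  obtain ⟨x, rfl⟩ := eq_vanishingIdeal_singleton_of_isMaximal L hM
  obtain ⟨i, hi, hx⟩ := h x
  exact hx ((mem_vanishingIdeal_singleton_iff x _).1 (hle (Ideal.subset_span ⟨i, hi, rfl⟩)))

theorem exists_prod_pow_eq_sum_of_not_algebraicIndependent {K A ι : Type*} [Field K]
    [CommRing A] [Algebra K A] {x : ι → A} {s : Finset ι}
    (h : ¬ AlgebraicIndependent K fun i : s => x i) :
    ∃ (α : ι →₀ ℕ) (T : Finset (ι →₀ ℕ)) (c : (ι →₀ ℕ) → K),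
      (∀ τ ∈ T, ∃ i ∈ s, α i < τ i) ∧
      ∏ i ∈ s, x i ^ α i = ∑ τ ∈ T, c τ • ∏ i ∈ s, x i ^ τ i := by
  classical
  obtain ⟨Q, hQs, hQ, hQ0⟩ : ∃ Q ∈ supported K (s : Set ι), aeval x Q = 0 ∧ Q ≠ 0 := by
    have h' : ¬ AlgebraicIndependent K (x ∘ (Subtype.val : (↑s : Set ι) → ι)) := h
    simpa only [algebraicIndependent_comp_subtype, not_forall, exists_prop] using h'
  have hsupp : ∀ τ ∈ Q.support, ∀ i, τ i ≠ 0 → i ∈ s := fun τ hτ i hi =>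
    mem_supported.1 hQs ((mem_vars_iff_mem_support i).2 ⟨τ, hτ, Finsupp.mem_support_iff.2 hi⟩)
  have hmon : ∀ τ ∈ Q.support, aeval x (monomial τ (coeff τ Q)) =
      coeff τ Q • ∏ i ∈ s, x i ^ τ i := fun τ hτ => by
    rw [aeval_monomial, Algebra.smul_def, Finsupp.prod_of_support_subset τ
      (fun i hi => hsupp τ hτ i (Finsupp.mem_support_iff.1 hi)) _ fun _ _ => pow_zero _]
  obtain ⟨α, hα, hmin⟩ := Q.support.exists_min_image Finsupp.degree (support_nonempty.2 hQ0)
  have hcα : coeff α Q ≠ 0 := mem_support_iff.1 hα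
  refine ⟨α, Q.support.erase α, fun τ => -(coeff α Q)⁻¹ * coeff τ Q, fun τ hτ => ?_, ?_⟩
  · obtain ⟨hne, hτ⟩ := Finset.mem_erase.1 hτ
    obtain ⟨i, hi⟩ : ∃ i, α i < τ i := by
      by_contra! hle
      have hτα : τ ≤ α := Finsupp.le_def.2 hle
      have hdeg := hmin τ hτ
      rw [← add_tsub_cancel_of_le hτα, map_add] at hdeg
      have hzero : α - τ = 0 := (Finsupp.degree_eq_zero_iff _).1 (by omega)
      exact hne (le_antisymm hτα (tsub_eq_zero_iff_le.1 hzero))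
    exact ⟨i, hsupp τ hτ i (by omega), hi⟩
  · rw [Q.as_sum, map_sum, Finset.sum_congr rfl hmon, ← Finset.add_sum_erase _ _ hα] at hQ
    calc ∏ i ∈ s, x i ^ α i = (coeff α Q)⁻¹ • coeff α Q • ∏ i ∈ s, x i ^ α i := by
          rw [smul_smul, inv_mul_cancel₀ hcα, one_smul]
      _ = _ := by
          rw [eq_neg_of_add_eq_zero_left hQ, smul_neg, Finset.smul_sum, ← Finset.sum_neg_distrib]
          simp only [smul_smul, ← neg_smul, neg_mul]

theorem AlgebraicIndependent.of_pow {K A κ : Type*} [Field K] [CommRing A] [IsDomain A]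
    [Algebra K A] [Finite κ] {x : κ → A} {n : κ → ℕ} (hn : ∀ k, n k ≠ 0)
    (hx : AlgebraicIndependent K fun k => x k ^ n k) : AlgebraicIndependent K x := by
  set S := Algebra.adjoin K (Set.range x)
  let x' : κ → S := fun k => ⟨x k, Algebra.subset_adjoin ⟨k, rfl⟩⟩
  have hy : AlgebraicIndependent K fun k => x' k ^ n k := .of_comp S.val hx
  have hx' : Algebra.adjoin K (Set.range x') = ⊤ := by
    rw [← Algebra.adjoin_adjoin_coe_preimage]
    congr 1
    ext ⟨a, ha⟩
    simp [x', Subtype.ext_iff]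
  have halg : Algebra.IsAlgebraic (Algebra.adjoin K (Set.range x')) S :=
    ⟨fun a => isAlgebraic_algebraMap
      (⟨a, hx' ▸ Algebra.mem_top⟩ : Algebra.adjoin K (Set.range x'))⟩
  have : Algebra.IsAlgebraic (Algebra.adjoin K (Set.range fun k => x' k ^ n k)) S := by
    refine ⟨fun a => (halg.isAlgebraic a).adjoin_of_forall_isAlgebraic ?_⟩
    rintro _ ⟨⟨k, rfl⟩, -⟩
    exact (isAlgebraic_algebraMap (⟨_, Algebra.subset_adjoin ⟨k, rfl⟩⟩ :
      Algebra.adjoin K (Set.range fun k => x' k ^ n k))).of_pow (Nat.pos_of_ne_zero (hn k))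
  have hB := hy.isTranscendenceBasis_iff_isAlgebraic.mpr inferInstance
  exact (Algebra.IsAlgebraic.isTranscendenceBasis_of_lift_le_trdeg_of_finite K x'
    hB.lift_cardinalMk_eq_trdeg.le).1.map' (f := S.val) Subtype.val_injective

section Fractions

variable {R F ι : Type*} [CommRing R] [Field F] [Algebra R F]

def simpleFractionSpan (good : Finset ι → Prop) (q : ι → R) : Submodule R F :=
  Submodule.span R
    {f | ∃ (A : Finset ι) (b : ι → ℕ), good A ∧ (∀ i ∈ A, 0 < b i) ∧
      f = (algebraMap R F (∏ i ∈ A, q i ^ b i))⁻¹}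

theorem exists_sum_of_mem_simpleFractionSpan [Fintype ι] {good : Finset ι → Prop} {q : ι → R}
    (hq : ∀ i, algebraMap R F (q i) ≠ 0) {f : F} (hf : f ∈ simpleFractionSpan good q) :
    ∃ (P : Finset ι → R) (b : Finset ι → ι → ℕ), (∀ A, ∀ i ∈ A, 0 < b A i) ∧
      (∀ A, P A ≠ 0 → good A) ∧
      f = ∑ A, algebraMap R F (P A) / algebraMap R F (∏ i ∈ A, q i ^ b A i) := by
  classical
  unfold simpleFractionSpan at hf
  induction hf using Submodule.span_induction with
  | mem f hf =>
    obtain ⟨A, b, hA, hb, rfl⟩ := hf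
    refine ⟨Pi.single A 1, fun A' => if A' = A then b else 1, fun A' i hi => ?_,
      fun A' hA' => ?_, ?_⟩
    · dsimp only
      split_ifs with h
      · exact hb i (h ▸ hi)
      · exact one_pos
    · obtain rfl | h := eq_or_ne A' A
      exacts [hA, absurd (Pi.single_eq_of_ne h _) hA']
    · rw [Finset.sum_eq_single A (fun A' _ h => by simp [Pi.single_eq_of_ne h]) (by simp)]
      simp
  | zero => exact ⟨0, fun _ _ => 1, fun _ _ _ => one_pos, fun A h => absurd rfl h, by simp⟩
  | add f g _ _ hf hg =>
    obtain ⟨P, b, hb, hP, rfl⟩ := hf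
    obtain ⟨P', b', hb', hP', rfl⟩ := hg
    refine ⟨fun A => P A * ∏ i ∈ A, q i ^ b' A i + P' A * ∏ i ∈ A, q i ^ b A i,
      b + b', fun A i hi => Nat.add_pos_left (hb A i hi) _, fun A hA => ?_, ?_⟩
    · by_cases h : P A = 0
      · exact hP' A fun h' => hA (by simp [h, h'])
      · exact hP A h
    · rw [← Finset.sum_add_distrib]
      refine Finset.sum_congr rfl fun A _ => ?_
      have hD : ∀ e : ι → ℕ, algebraMap R F (∏ i ∈ A, q i ^ e i) ≠ 0 := fun e => by
        simpa only [map_prod, map_pow] using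
          Finset.prod_ne_zero_iff.2 fun i _ => pow_ne_zero _ (hq i)
      rw [div_add_div _ _ (hD _) (hD _)]
      simp only [Pi.add_apply, pow_add, Finset.prod_mul_distrib, map_add, map_mul]
      ring
  | smul r f _ hf =>
    obtain ⟨P, b, hb, hP, rfl⟩ := hf
    refine ⟨fun A => r * P A, b, hb, fun A hA => hP A (right_ne_zero_of_mul hA), ?_⟩
    simp only [Algebra.smul_def, Finset.mul_sum, map_mul, mul_div_assoc]

variable [DecidableEq ι] {q : ι → R} {M : Submodule R F} {A : Finset ι}

theorem div_prod_pow_mem_of_le {i : ι} (hq : algebraMap R F (q i) ≠ 0) (hi : i ∈ A)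
    {a e : ι → ℕ} (hle : e i ≤ a i)
    (hM : (algebraMap R F (∏ j ∈ A.erase i, q j ^ e j))⁻¹ ∈ M) :
    algebraMap R F (∏ j ∈ A, q j ^ a j) / algebraMap R F (∏ j ∈ A, q j ^ e j) ∈ M := by
  have key : algebraMap R F (∏ j ∈ A, q j ^ a j) / algebraMap R F (∏ j ∈ A, q j ^ e j) =
      (q i ^ (a i - e i) * ∏ j ∈ A.erase i, q j ^ a j) •
        (algebraMap R F (∏ j ∈ A.erase i, q j ^ e j))⁻¹ := by
    rw [← Finset.mul_prod_erase A _ hi, ← Finset.mul_prod_erase A (fun j => q j ^ e j) hi,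
      Algebra.smul_def, ← Nat.sub_add_cancel hle]
    simp only [map_mul, map_pow, pow_add, Nat.add_sub_cancel]
    field_simp
  rw [key]
  exact M.smul_mem _ hM

theorem inv_prod_pow_mem_of_sum_mul_eq_one {b : ι → ℕ} {g : ι → R}
    (hq : ∀ i ∈ A, algebraMap R F (q i) ≠ 0) (hg : ∑ i ∈ A, g i * q i ^ b i = 1)
    (hM : ∀ i ∈ A, (algebraMap R F (∏ j ∈ A.erase i, q j ^ b j))⁻¹ ∈ M) :
    (algebraMap R F (∏ j ∈ A, q j ^ b j))⁻¹ ∈ M := by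
  have key : (algebraMap R F (∏ j ∈ A, q j ^ b j))⁻¹ =
      ∑ i ∈ A, g i • (algebraMap R F (∏ j ∈ A.erase i, q j ^ b j))⁻¹ := by
    calc (algebraMap R F (∏ j ∈ A, q j ^ b j))⁻¹
        = algebraMap R F (∑ i ∈ A, g i * q i ^ b i) *
            (algebraMap R F (∏ j ∈ A, q j ^ b j))⁻¹ := by
          rw [hg, map_one, one_mul]
      _ = _ := by
          rw [map_sum, Finset.sum_mul]
          refine Finset.sum_congr rfl fun i hi => ?_
          have hqi := hq i hi
          rw [← Finset.mul_prod_erase A _ hi, Algebra.smul_def]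
          simp only [map_mul, map_pow]
          field_simp
  rw [key]
  exact M.sum_mem fun i hi => M.smul_mem _ (hM i hi)

theorem inv_prod_pow_mem_of_relation {b : ι → ℕ} (hb : ∀ i ∈ A, 0 < b i)
    (hq : ∀ i ∈ A, algebraMap R F (q i) ≠ 0) {α : ι →₀ ℕ} {T : Finset (ι →₀ ℕ)}
    {c : (ι →₀ ℕ) → R} (hT : ∀ τ ∈ T, ∃ i ∈ A, α i < τ i)
    (hrel : ∏ i ∈ A, (q i ^ b i) ^ α i = ∑ τ ∈ T, c τ * ∏ i ∈ A, (q i ^ b i) ^ τ i)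
    (hM : ∀ i ∈ A, ∀ e : ι → ℕ, (∀ j ∈ A.erase i, 0 < e j) →
      (algebraMap R F (∏ j ∈ A.erase i, q j ^ e j))⁻¹ ∈ M) :
    (algebraMap R F (∏ j ∈ A, q j ^ b j))⁻¹ ∈ M := by
  set e : ι → ℕ := fun j => b j * (α j + 1)
  have hα : algebraMap R F (∏ i ∈ A, (q i ^ b i) ^ α i) ≠ 0 := by
    simpa only [map_prod, map_pow] using
      Finset.prod_ne_zero_iff.2 fun i hi => pow_ne_zero _ (pow_ne_zero _ (hq i hi))
  have key : (algebraMap R F (∏ j ∈ A, q j ^ b j))⁻¹ = ∑ τ ∈ T, c τ •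
      (algebraMap R F (∏ j ∈ A, q j ^ (b j * τ j)) / algebraMap R F (∏ j ∈ A, q j ^ e j)) := by
    calc (algebraMap R F (∏ j ∈ A, q j ^ b j))⁻¹
        = algebraMap R F (∏ i ∈ A, (q i ^ b i) ^ α i) / algebraMap R F (∏ j ∈ A, q j ^ e j) := by
          simp only [e, mul_add, mul_one, pow_add, pow_mul, Finset.prod_mul_distrib, map_mul]
          field_simp
      _ = _ := by
          simp only [hrel, map_sum, Finset.sum_div, Algebra.smul_def, map_mul, mul_div_assoc,
            pow_mul]
  rw [key]
  refine M.sum_mem fun τ hτ => M.smul_mem _ ?_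
  obtain ⟨i, hi, hlt⟩ := hT τ hτ
  exact div_prod_pow_mem_of_le (hq i hi) hi (Nat.mul_le_mul_left _ hlt)
    (hM i hi e fun j hj => Nat.mul_pos (hb j (Finset.mem_of_mem_erase hj)) (Nat.succ_pos _))

end Fractions

def IsLeinartasAdmissible {K σ ι : Type*} [Field K] (q : ι → MvPolynomial σ K)
    (A : Finset ι) : Prop :=
  (∃ x : σ → AlgebraicClosure K, ∀ i ∈ A,
      eval x (map (algebraMap K (AlgebraicClosure K)) (q i)) = 0) ∧
    AlgebraicIndependent K fun i : A => q i

theorem inv_prod_pow_mem_simpleFractionSpan {K σ ι F : Type*} [Field K] [Finite σ]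
    [DecidableEq ι] [Field F] [Algebra (MvPolynomial σ K) F] {q : ι → MvPolynomial σ K}
    (hq : ∀ i, algebraMap _ F (q i) ≠ 0) (A : Finset ι) (b : ι → ℕ) (hb : ∀ i ∈ A, 0 < b i) :
    (algebraMap _ F (∏ i ∈ A, q i ^ b i))⁻¹ ∈ simpleFractionSpan (IsLeinartasAdmissible q) q := by
  induction A using Finset.strongInduction generalizing b with
  | H A ih =>
  have IH : ∀ i ∈ A, ∀ e : ι → ℕ, (∀ j ∈ A.erase i, 0 < e j) →
      (algebraMap _ F (∏ j ∈ A.erase i, q j ^ e j))⁻¹ ∈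
        simpleFractionSpan (IsLeinartasAdmissible q) q :=
    fun i hi => ih _ (Finset.erase_ssubset hi)
  by_cases hadm : IsLeinartasAdmissible q A
  · exact Submodule.subset_span ⟨A, b, hadm, hb, rfl⟩
  by_cases hzero : ∃ x : σ → AlgebraicClosure K, ∀ i ∈ A,
      eval x (map (algebraMap K (AlgebraicClosure K)) (q i)) = 0
  · have hdep : ¬ AlgebraicIndependent K fun i : A => q i ^ b i :=
      fun h => hadm ⟨hzero, h.of_pow fun i => (hb i i.2).ne'⟩
    obtain ⟨α, T, c, hT, hrel⟩ :=
      exists_prod_pow_eq_sum_of_not_algebraicIndependent (x := fun i => q i ^ b i) hdep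
    exact inv_prod_pow_mem_of_relation hb (fun i _ => hq i) hT
      (by simpa only [Algebra.smul_def] using hrel) IH
  · obtain ⟨g, hg⟩ := exists_sum_mul_eq_one_of_forall_exists_aeval_ne_zero
      (L := AlgebraicClosure K) (f := fun i => q i ^ b i) (A := A) fun x => by
        simp only [not_exists, not_forall, exists_prop] at hzero
        obtain ⟨i, hi, hx⟩ := hzero x
        refine ⟨i, hi, ?_⟩
        rw [map_pow, aeval_def, ← eval_map]
        exact pow_ne_zero _ hx
    exact inv_prod_pow_mem_of_sum_mul_eq_one (fun i _ => hq i) hg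
      fun i hi => IH i hi b fun j hj => hb j (Finset.mem_of_mem_erase hj)

theorem leinartas_decomposition_general {K : Type*} [Field K] {d m : ℕ}
    (p q : MvPolynomial (Fin d) K)
    (c : MvPolynomial (Fin d) K) (hc : IsUnit c)
    (qi : Fin m → MvPolynomial (Fin d) K) (e : Fin m → ℕ)
    (hirr : ∀ i, Irreducible (qi i)) (he : ∀ i, 0 < e i)
    (hfac : q = c * ∏ i, qi i ^ e i) :
    ∃ (P : Finset (Fin m) → MvPolynomial (Fin d) K)
      (b : Finset (Fin m) → Fin m → ℕ),
      (∀ A, ∀ i ∈ A, 0 < b A i) ∧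
      (∀ A, P A ≠ 0 →
        (∃ x : Fin d → AlgebraicClosure K, ∀ i ∈ A,
            MvPolynomial.eval x
              (MvPolynomial.map (algebraMap K (AlgebraicClosure K)) (qi i)) = 0) ∧
          AlgebraicIndependent K (fun i : A => qi (i : Fin m))) ∧
      algebraMap (MvPolynomial (Fin d) K) (FractionRing (MvPolynomial (Fin d) K)) p /
          algebraMap (MvPolynomial (Fin d) K) (FractionRing (MvPolynomial (Fin d) K)) q =
        ∑ A : Finset (Fin m),
          algebraMap (MvPolynomial (Fin d) K) (FractionRing (MvPolynomial (Fin d) K)) (P A) /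
            algebraMap (MvPolynomial (Fin d) K) (FractionRing (MvPolynomial (Fin d) K))
              (∏ i ∈ A, qi i ^ b A i) := by
  have hq : ∀ i, algebraMap _ (FractionRing (MvPolynomial (Fin d) K)) (qi i) ≠ 0 :=
    fun i => (map_ne_zero_iff _ (IsFractionRing.injective _ _)).2 (hirr i).ne_zero
  obtain ⟨u, rfl⟩ := hc
  obtain ⟨P, b, hb, hP, hsum⟩ := exists_sum_of_mem_simpleFractionSpan hq <|
    Submodule.smul_mem _ (↑u⁻¹ * p) <|
      inv_prod_pow_mem_simpleFractionSpan hq Finset.univ e fun i _ => he i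
  refine ⟨P, b, hb, hP, ?_⟩
  rw [← hsum, hfac, Algebra.smul_def]
  simp only [map_mul, map_units_inv]
  field_simp

/-- **Leĭnartas decomposition** (Theorem 1).
Let `q = c · q₁^{e₁} ⋯ q_m^{e_m}` be the factorization of `q ≠ 0` into a unit and
pairwise non-associate irreducibles.  Then `p/q` can be written as
`Σ_A p_A / ∏_{i∈A} q_i^{b_{A,i}}`, the sum over subsets `A ⊆ {1,…,m}` such that
the `q_i`, `i ∈ A`, have a common zero in `K̄^d` and are algebraically
independent over `K`. -/
theorem leinartas_decomposition {K : Type*} [Field K] {d m : ℕ} (hd : 1 ≤ d)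
    (p q : MvPolynomial (Fin d) K) (hq : q ≠ 0)
    (c : MvPolynomial (Fin d) K) (hc : IsUnit c)
    (qi : Fin m → MvPolynomial (Fin d) K) (e : Fin m → ℕ)
    (hirr : ∀ i, Irreducible (qi i)) (he : ∀ i, 0 < e i)
    (hassoc : ∀ i j, i ≠ j → ¬ Associated (qi i) (qi j))
    (hfac : q = c * ∏ i, qi i ^ e i) :
    ∃ (P : Finset (Fin m) → MvPolynomial (Fin d) K)
      (b : Finset (Fin m) → Fin m → ℕ),
      (∀ A, ∀ i ∈ A, 0 < b A i) ∧
      (∀ A, P A ≠ 0 →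
        (∃ x : Fin d → AlgebraicClosure K, ∀ i ∈ A,
            MvPolynomial.eval x
              (MvPolynomial.map (algebraMap K (AlgebraicClosure K)) (qi i)) = 0) ∧
          AlgebraicIndependent K (fun i : A => qi (i : Fin m))) ∧
      algebraMap (MvPolynomial (Fin d) K) (FractionRing (MvPolynomial (Fin d) K)) p /
          algebraMap (MvPolynomial (Fin d) K) (FractionRing (MvPolynomial (Fin d) K)) q =
        ∑ A : Finset (Fin m),
          algebraMap (MvPolynomial (Fin d) K) (FractionRing (MvPolynomial (Fin d) K)) (P A) /
            algebraMap (MvPolynomial (Fin d) K) (FractionRing (MvPolynomial (Fin d) K))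
              (∏ i ∈ A, qi i ^ b A i) :=
  leinartas_decomposition_general p q c hc qi e hirr he hfac
end

section
/- Let K be a field and d ≥ 1. Every rational function f ∈ K(X₁,…,X_d) can be written as a finite sum of rational functions p_j/d_j with p_j, d_j ∈ K[X₁,…,X_d], d_j ≠ 0, such that each denominator d_j has at most d pairwise non-associate irreducible factors. -/
/-! If `q₁, …, q_k` are pairwise non-associated irreducibles with `k > d`, the powers
`gᵢ = qᵢ ^ eᵢ` are algebraically dependent over `K`, because `K[X₁, …, X_d]` has transcendence
degree `d`. Pick a relation `∑ c_α g^α = 0` and an exponent `β` that is minimal in its support for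
the pointwise order. Dividing the relation by `c_β g^(β + 1)` writes `1 / ∏ gᵢ` as a
`K`-combination of the fractions `g^α / g^(β + 1)`, `α ≠ β`, and minimality of `β` makes some
`gᵢ` cancel from the denominator of each of them. Induction on the number of distinct irreducible
factors of the denominator finishes the proof. -/

open MvPolynomial Submodule

section

variable {R : Type*} [CommRing R]

def HasAtMostIrreducibleFactors (d : ℕ) (b : R) : Prop :=
  ∃ (k : ℕ), k ≤ d ∧ ∃ (c : R) (r : Fin k → R) (e : Fin k → ℕ),
    IsUnit c ∧ (∀ i, Irreducible (r i)) ∧ (∀ i i', i ≠ i' → ¬ Associated (r i) (r i')) ∧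
    b = c * ∏ i, r i ^ e i

lemma hasAtMostIrreducibleFactors_prod_pow {d : ℕ} {s : Finset R} (hcard : s.card ≤ d)
    (hirr : ∀ r ∈ s, Irreducible r) (hassoc : (s : Set R).Pairwise (¬ Associated · ·))
    (e : R → ℕ) : HasAtMostIrreducibleFactors d (∏ r ∈ s, r ^ e r) := by
  set r : Fin s.card → R := fun i => s.equivFin.symm i
  refine ⟨s.card, hcard, 1, r, e ∘ r, isUnit_one, fun i => hirr _ (s.equivFin.symm i).2,
    fun i i' hne => hassoc (s.equivFin.symm i).2 (s.equivFin.symm i').2 ?_, ?_⟩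
  · exact fun h => hne (s.equivFin.symm.injective (Subtype.ext h))
  · rw [one_mul, ← Finset.prod_coe_sort s]
    exact (Fintype.prod_equiv s.equivFin.symm _ _ fun _ => rfl).symm

variable (R) [IsDomain R] in
def fewFactorsFractions (d : ℕ) : Submodule R (FractionRing R) :=
  span R ((fun b => (algebraMap R (FractionRing R) b)⁻¹) ''
    {b | b ≠ 0 ∧ HasAtMostIrreducibleFactors d b})

end

lemma prod_pow_div_prod_pow_eq {ι G : Type*} [CommGroupWithZero G] (s : Finset ι) {x : ι → G}
    (hx : ∀ i ∈ s, x i ≠ 0) (a b : ι → ℕ) :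
    (∏ i ∈ s, x i ^ a i) / ∏ i ∈ s, x i ^ b i =
      (∏ i ∈ s, x i ^ (a i - b i)) / ∏ i ∈ s, x i ^ (b i - a i) := by
  have hne : ∀ n : ι → ℕ, ∏ i ∈ s, x i ^ n i ≠ 0 :=
    fun n => Finset.prod_ne_zero_iff.mpr fun i hi => pow_ne_zero _ (hx i hi)
  rw [div_eq_div_iff (hne b) (hne _), ← Finset.prod_mul_distrib, ← Finset.prod_mul_distrib]
  exact Finset.prod_congr rfl fun i _ => by rw [← pow_add, ← pow_add]; congr 1; omega

lemma inv_prod_eq_sum_of_aeval_eq_zero {K L ι : Type*} [Field K] [Field L] [Algebra K L]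
    [Fintype ι] {x : ι → L} (hx : ∀ i, x i ≠ 0) {F : MvPolynomial ι K} (hF : aeval x F = 0)
    {β : ι →₀ ℕ} (hβ : β ∈ F.support) :
    (∏ i, x i)⁻¹ = ∑ α ∈ F.support.erase β,
      algebraMap K L (-coeff α F / coeff β F) * ((∏ i, x i ^ α i) / ∏ i, x i ^ (β i + 1)) := by
  set c : (ι →₀ ℕ) → L := fun α => algebraMap K L (coeff α F)
  set P := ∏ i, x i ^ β i
  have hc : c β ≠ 0 := (map_ne_zero _).mpr (mem_support_iff.mp hβ)
  have hP : P ≠ 0 := Finset.prod_ne_zero_iff.mpr fun i _ => pow_ne_zero _ (hx i)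
  rw [aeval_def, eval₂_eq'] at hF
  have hsplit : ∑ α ∈ F.support.erase β, c α * ∏ i, x i ^ α i = -(c β * P) :=
    eq_neg_of_add_eq_zero_right ((Finset.add_sum_erase _ _ hβ).trans hF)
  have hpow : ∏ i, x i ^ (β i + 1) = P * ∏ i, x i := by
    simp only [P, pow_succ, Finset.prod_mul_distrib]
  calc (∏ i, x i)⁻¹
      = -(c β * P * ∏ i, x i)⁻¹ * -(c β * P) := by
        rw [neg_mul_neg, mul_inv_rev, mul_assoc, inv_mul_cancel₀ (mul_ne_zero hc hP), mul_one]
    _ = ∑ α ∈ F.support.erase β, -(c β * P * ∏ i, x i)⁻¹ * (c α * ∏ i, x i ^ α i) := by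
      rw [← hsplit, Finset.mul_sum]
    _ = _ := Finset.sum_congr rfl fun α _ => by
      rw [hpow, map_div₀, map_neg]
      ring

section

variable {K R : Type*} [Field K] [CommRing R] [IsDomain R] [Algebra K R]

lemma inv_algebraMap_prod_mem_of_not_algebraicIndependent {ι : Type*} [Fintype ι] {g : ι → R}
    (hg : ∀ i, g i ≠ 0) (hdep : ¬ AlgebraicIndependent K g) {N : Submodule R (FractionRing R)}
    (hN : ∀ n : ι → ℕ, (∃ i, n i = 0) → (algebraMap R (FractionRing R) (∏ i, g i ^ n i))⁻¹ ∈ N) :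
    (algebraMap R (FractionRing R) (∏ i, g i))⁻¹ ∈ N := by
  set φ := algebraMap R (FractionRing R)
  have hx : ∀ i, φ (g i) ≠ 0 := fun i =>
    (map_ne_zero_iff _ (IsFractionRing.injective R _)).mpr (hg i)
  obtain ⟨F, hF, hF0⟩ : ∃ F : MvPolynomial ι K, aeval g F = 0 ∧ F ≠ 0 := by
    simpa [algebraicIndependent_iff] using hdep
  have hFx : aeval (φ ∘ g) F = 0 := by rw [aeval_algebraMap_apply, hF, map_zero]
  obtain ⟨β, hβ, hβmin⟩ := F.support.exists_minimal (support_nonempty.mpr hF0)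
  rw [map_prod, inv_prod_eq_sum_of_aeval_eq_zero hx hFx hβ]
  refine sum_mem fun α hα => ?_
  obtain ⟨hne, hα⟩ := Finset.mem_erase.mp hα
  obtain ⟨i, hi⟩ : ∃ i, β i < α i := by
    by_contra! h
    exact hne (le_antisymm (Finsupp.le_def.mpr h) (hβmin hα (Finsupp.le_def.mpr h)))
  rw [prod_pow_div_prod_pow_eq _ (fun i _ => hx i), ← Algebra.smul_def]
  refine N.smul_of_tower_mem _ ?_
  have hmem := N.smul_mem (∏ j, g j ^ (α j - (β j + 1))) (hN (fun j => β j + 1 - α j) ⟨i, by omega⟩)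
  simpa only [div_eq_mul_inv, map_prod, map_pow, Algebra.smul_def] using hmem

variable {d : ℕ}

lemma inv_algebraMap_prod_pow_mem_fewFactorsFractions (htr : Algebra.trdeg K R ≤ d)
    (s : Finset R) (hirr : ∀ r ∈ s, Irreducible r)
    (hassoc : (s : Set R).Pairwise (¬ Associated · ·)) (e : R → ℕ) :
    (algebraMap R (FractionRing R) (∏ r ∈ s, r ^ e r))⁻¹ ∈ fewFactorsFractions R d := by
  classical
  induction s using Finset.strongInduction generalizing e with
  | H s ih =>
  by_cases hcard : s.card ≤ d
  · have hne : ∏ r ∈ s, r ^ e r ≠ 0 :=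
      Finset.prod_ne_zero_iff.mpr fun r hr => pow_ne_zero _ (hirr r hr).ne_zero
    exact subset_span ⟨_, ⟨hne, hasAtMostIrreducibleFactors_prod_pow hcard hirr hassoc e⟩, rfl⟩
  have hdep : ¬ AlgebraicIndependent K (fun r : s => (r : R) ^ e r) := fun hind => hcard <| by
    have hle := hind.cardinalMk_le_trdeg.trans htr
    rwa [Cardinal.mk_coe_finset, Nat.cast_le] at hle
  rw [← Finset.prod_coe_sort s (fun r => r ^ e r)]
  refine inv_algebraMap_prod_mem_of_not_algebraicIndependent
    (fun r : s => pow_ne_zero _ (hirr r r.2).ne_zero) hdep ?_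
  rintro n ⟨r₀, hr₀⟩
  set e' : R → ℕ := fun r => if h : r ∈ s then e r * n ⟨r, h⟩ else 0
  have hprod : ∏ r : s, ((r : R) ^ e r) ^ n r = ∏ r ∈ s.erase r₀, r ^ e' r := by
    rw [Finset.prod_erase _ (by simp [e', hr₀]), ← Finset.prod_coe_sort s]
    exact Finset.prod_congr rfl fun r _ => by simp [e', ← pow_mul]
  rw [hprod]
  exact ih _ (Finset.erase_ssubset r₀.2) (fun r hr => hirr r (Finset.mem_of_mem_erase hr))
    (hassoc.mono (Finset.coe_subset.mpr (Finset.erase_subset _ _))) e'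

theorem fewFactorsFractions_eq_top [UniqueFactorizationMonoid R] (htr : Algebra.trdeg K R ≤ d) :
    fewFactorsFractions R d = ⊤ := by
  classical
  let := UniqueFactorizationMonoid.strongNormalizationMonoid (α := R)
  refine eq_top_iff.mpr fun f _ => ?_
  obtain ⟨a, b, hb, rfl⟩ := IsFractionRing.div_surjective R f
  obtain ⟨u, hu⟩ := UniqueFactorizationMonoid.prod_normalizedFactors (nonZeroDivisors.ne_zero hb)
  set s := (UniqueFactorizationMonoid.normalizedFactors b).toFinset
  have hirr : ∀ r ∈ s, Irreducible r := fun r hr =>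
    UniqueFactorizationMonoid.irreducible_of_normalized_factor r (Multiset.mem_toFinset.mp hr)
  have hassoc : (s : Set R).Pairwise (¬ Associated · ·) := fun r hr r' hr' hne h =>
    hne (h.eq_of_normalized
      (UniqueFactorizationMonoid.normalize_normalized_factor r (Multiset.mem_toFinset.mp hr))
      (UniqueFactorizationMonoid.normalize_normalized_factor r' (Multiset.mem_toFinset.mp hr')))
  convert smul_mem _ (a * ↑u⁻¹) (inv_algebraMap_prod_pow_mem_fewFactorsFractions (K := K) htr s
    hirr hassoc (UniqueFactorizationMonoid.normalizedFactors b).count) using 1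
  rw [Algebra.smul_def, ← Finset.prod_multiset_count]
  nth_rw 1 [← hu]
  rw [map_mul, map_mul, map_units_inv]
  ring

end

lemma exists_eq_sum_div_of_mem_fewFactorsFractions {R : Type*} [CommRing R] [IsDomain R] {d : ℕ}
    {f : FractionRing R} (hf : f ∈ fewFactorsFractions R d) :
    ∃ (n : ℕ) (p den : Fin n → R), (∀ j, den j ≠ 0) ∧
      (∀ j, HasAtMostIrreducibleFactors d (den j)) ∧
      f = ∑ j, algebraMap R (FractionRing R) (p j) / algebraMap R (FractionRing R) (den j) := by
  obtain ⟨n, p, g, hsum⟩ := mem_span_set'.mp hf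
  choose den hden using fun j => (g j).2
  refine ⟨n, p, den, fun j => (hden j).1.1, fun j => (hden j).1.2, ?_⟩
  rw [← hsum]
  exact Finset.sum_congr rfl fun j _ => by rw [← (hden j).2, Algebra.smul_def, div_eq_mul_inv]

theorem sum_of_fractions_with_at_most_d_irreducible_factors_general
    {K : Type*} [Field K] {d : ℕ}
    (f : FractionRing (MvPolynomial (Fin d) K)) :
    ∃ (n : ℕ) (p den : Fin n → MvPolynomial (Fin d) K),
      (∀ j, den j ≠ 0) ∧
      (∀ j, ∃ (k : ℕ), k ≤ d ∧
        ∃ (c : MvPolynomial (Fin d) K) (r : Fin k → MvPolynomial (Fin d) K)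
          (e : Fin k → ℕ),
          IsUnit c ∧ (∀ i, Irreducible (r i)) ∧
          (∀ i i', i ≠ i' → ¬ Associated (r i) (r i')) ∧
          den j = c * ∏ i, r i ^ e i) ∧
      f = ∑ j, algebraMap (MvPolynomial (Fin d) K) (FractionRing (MvPolynomial (Fin d) K)) (p j) /
            algebraMap (MvPolynomial (Fin d) K) (FractionRing (MvPolynomial (Fin d) K)) (den j) := by
  have htr : Algebra.trdeg K (MvPolynomial (Fin d) K) ≤ d := by simp
  exact exists_eq_sum_div_of_mem_fewFactorsFractions
    ((fewFactorsFractions_eq_top htr).symm ▸ mem_top : f ∈ fewFactorsFractions _ d)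

/-- **Corollary.** Every rational function in `d` variables is a finite sum of
rational functions each of whose denominators has at most `d` pairwise
non-associate irreducible factors. -/
theorem sum_of_fractions_with_at_most_d_irreducible_factors
    {K : Type*} [Field K] {d : ℕ} (hd : 1 ≤ d)
    (f : FractionRing (MvPolynomial (Fin d) K)) :
    ∃ (n : ℕ) (p den : Fin n → MvPolynomial (Fin d) K),
      (∀ j, den j ≠ 0) ∧
      (∀ j, ∃ (k : ℕ), k ≤ d ∧
        ∃ (c : MvPolynomial (Fin d) K) (r : Fin k → MvPolynomial (Fin d) K)
          (e : Fin k → ℕ),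
          IsUnit c ∧ (∀ i, Irreducible (r i)) ∧
          (∀ i i', i ≠ i' → ¬ Associated (r i) (r i')) ∧
          den j = c * ∏ i, r i ^ e i) ∧
      f = ∑ j, algebraMap (MvPolynomial (Fin d) K) (FractionRing (MvPolynomial (Fin d) K)) (p j) /
            algebraMap (MvPolynomial (Fin d) K) (FractionRing (MvPolynomial (Fin d) K)) (den j) :=
  sum_of_fractions_with_at_most_d_irreducible_factors_general f
end

section
/- Let K be a field with algebraic closure K̄, let d ≥ 1, and let p, q ∈ K[X₁,…,X_d] with q ≠ 0. Let q = c·q₁^{e₁}⋯q_m^{e_m} be the factorization of q into a unit c and pairwise non-associate irreducible polynomials q₁,…,q_m with positive exponents e₁,…,e_m. Then the rational function f = p/q ∈ K(X₁,…,X_d) can be written as f = Σ_A p_A / ∏_{i∈A} q_i^{e_i}, where the sum ranges over subsets A ⊆ {1,…,m} such that the polynomials q_i for i ∈ A have a common zero in K̄^d, and each p_A ∈ K[X₁,…,X_d] (possibly zero). -/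
/-! If the `qᵢ` with `i ∈ B` have no common zero in `K̄^d`, the Nullstellensatz makes the
`qᵢ^{eᵢ}` with `i ∈ B` generate the unit ideal, say `∑_{i ∈ B} aᵢ qᵢ^{eᵢ} = 1`; then
`p / ∏_{i ∈ B} qᵢ^{eᵢ} = ∑_{i ∈ B} aᵢ p / ∏_{j ∈ B \ {i}} qⱼ^{eⱼ}`. Strong induction on `B`,
started at `B = {1, …, m}` after absorbing the unit `c` into `p`, shrinks every denominator until
its factors have a common zero. -/

open MvPolynomial

section PartialFractions

variable {R F ι : Type*} [CommRing R] [Field F] [Algebra R F]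

theorem Ideal.exists_sum_mul_eq_one_of_span_image_eq_top {v : ι → R} {B : Finset ι}
    (h : Ideal.span (v '' B) = ⊤) : ∃ a : ι → R, ∑ i ∈ B, a i * v i = 1 := by
  obtain ⟨l, hl, hsum⟩ := (Finsupp.mem_span_image_iff_linearCombination R).mp
    (h ▸ Submodule.mem_top : (1 : R) ∈ Ideal.span (v '' B))
  refine ⟨l, ?_⟩
  rw [← hsum, Finsupp.linearCombination_apply, Finsupp.sum_of_support_subset l hl _ (by simp)]
  simp only [smul_eq_mul]

theorem Ideal.span_image_pow_eq_top {v : ι → R} {s : Set ι} (e : ι → ℕ)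
    (h : Ideal.span (v '' s) = ⊤) : Ideal.span ((fun i => v i ^ e i) '' s) = ⊤ := by
  rw [← Ideal.radical_eq_top, eq_top_iff, ← h, Ideal.span_le]
  rintro _ ⟨i, hi, rfl⟩
  exact ⟨e i, Ideal.subset_span ⟨i, hi, rfl⟩⟩

theorem algebraMap_div_prod_eq_sum_div_prod_erase [DecidableEq ι] {a v : ι → R} {B : Finset ι}
    (hB : ∑ i ∈ B, a i * v i = 1) (hne : algebraMap R F (∏ i ∈ B, v i) ≠ 0) (p : R) :
    algebraMap R F p / algebraMap R F (∏ i ∈ B, v i) =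
      ∑ i ∈ B, algebraMap R F (a i * p) / algebraMap R F (∏ j ∈ B.erase i, v j) := by
  have hp : ∑ i ∈ B, a i * p * v i = p := by
    simp only [mul_right_comm _ p, ← Finset.sum_mul, hB, one_mul]
  conv_lhs => rw [← hp, map_sum, Finset.sum_div]
  refine Finset.sum_congr rfl fun i hi => ?_
  rw [← Finset.prod_erase_mul B v hi] at hne ⊢
  rw [map_mul _ (a i * p), map_mul _ (∏ j ∈ B.erase i, v j) (v i),
    mul_div_mul_right _ _ (right_ne_zero_of_mul (map_mul (algebraMap R F) _ _ ▸ hne))]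

variable (F) (v : ι → R) (good : Finset ι → Prop) [Fintype ι]

def partialFractions : AddSubmonoid F where
  carrier := {x | ∃ P : Finset ι → R, (∀ A, P A ≠ 0 → good A) ∧
    x = ∑ A, algebraMap R F (P A) / algebraMap R F (∏ i ∈ A, v i)}
  zero_mem' := ⟨0, by simp, by simp⟩
  add_mem' := by
    rintro _ _ ⟨P, hP, rfl⟩ ⟨Q, hQ, rfl⟩
    refine ⟨P + Q, fun A hA => ?_, ?_⟩
    · by_cases h : P A = 0
      · exact hQ A (by simpa [h] using hA)
      · exact hP A h
    · simp only [Pi.add_apply, map_add, add_div, Finset.sum_add_distrib]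

variable {F v good}

theorem div_prod_mem_partialFractions {A : Finset ι} (hA : good A) (r : R) :
    algebraMap R F r / algebraMap R F (∏ i ∈ A, v i) ∈ partialFractions F v good := by
  classical
  refine ⟨fun B => if B = A then r else 0, fun B hB => ?_, ?_⟩
  · obtain rfl : B = A := by by_contra h; simp [h] at hB
    exact hA
  · rw [Fintype.sum_eq_single A fun B hB => by simp [hB]]
    simp

theorem div_prod_mem_partialFractions_of_span_eq_top
    (hbad : ∀ B : Finset ι, ¬ good B → Ideal.span (v '' B) = ⊤) (B : Finset ι) (p : R) :
    algebraMap R F p / algebraMap R F (∏ i ∈ B, v i) ∈ partialFractions F v good := by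
  classical
  induction B using Finset.strongInduction generalizing p with
  | _ B ih =>
  by_cases hB : good B
  · exact div_prod_mem_partialFractions hB p
  by_cases hne : algebraMap R F (∏ i ∈ B, v i) = 0
  · rw [hne, div_zero]
    exact zero_mem _
  obtain ⟨a, ha⟩ := Ideal.exists_sum_mul_eq_one_of_span_image_eq_top (hbad B hB)
  rw [algebraMap_div_prod_eq_sum_div_prod_erase ha hne]
  exact sum_mem fun i hi => ih _ (Finset.erase_ssubset hi) _

end PartialFractions

theorem MvPolynomial.span_eq_top_of_not_exists_common_zero {k K σ : Type*} [Field k] [Field K]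
    [Algebra k K] [IsAlgClosed K] [Finite σ] {S : Set (MvPolynomial σ k)}
    (h : ¬ ∃ x : σ → K, ∀ f ∈ S, aeval x f = 0) : Ideal.span S = ⊤ := by
  have hempty : zeroLocus K (Ideal.span S) = ∅ :=
    Set.eq_empty_of_forall_notMem fun x hx => h ⟨x, by rwa [zeroLocus_span] at hx⟩
  rw [← Ideal.radical_eq_top, ← vanishingIdeal_zeroLocus_eq_radical (K := K), hempty,
    vanishingIdeal_empty]

theorem nullstellensatz_decomposition_general {K : Type*} [Field K] {d m : ℕ}
    (p q : MvPolynomial (Fin d) K)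
    (c : MvPolynomial (Fin d) K) (hc : IsUnit c)
    (qi : Fin m → MvPolynomial (Fin d) K) (e : Fin m → ℕ)
    (hfac : q = c * ∏ i, qi i ^ e i) :
    ∃ P : Finset (Fin m) → MvPolynomial (Fin d) K,
      (∀ A, P A ≠ 0 →
        ∃ x : Fin d → AlgebraicClosure K, ∀ i ∈ A,
          MvPolynomial.eval x
            (MvPolynomial.map (algebraMap K (AlgebraicClosure K)) (qi i)) = 0) ∧
      algebraMap (MvPolynomial (Fin d) K) (FractionRing (MvPolynomial (Fin d) K)) p /
          algebraMap (MvPolynomial (Fin d) K) (FractionRing (MvPolynomial (Fin d) K)) q =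
        ∑ A : Finset (Fin m),
          algebraMap (MvPolynomial (Fin d) K) (FractionRing (MvPolynomial (Fin d) K)) (P A) /
            algebraMap (MvPolynomial (Fin d) K) (FractionRing (MvPolynomial (Fin d) K))
              (∏ i ∈ A, qi i ^ e i) := by
  have hbad : ∀ B : Finset (Fin m), ¬ (∃ x : Fin d → AlgebraicClosure K, ∀ i ∈ B,
      eval x (map (algebraMap K (AlgebraicClosure K)) (qi i)) = 0) →
      Ideal.span ((fun i => qi i ^ e i) '' B) = ⊤ := fun B hB =>
    Ideal.span_image_pow_eq_top e <|
      span_eq_top_of_not_exists_common_zero (K := AlgebraicClosure K)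
        (by simpa [eval_map, ← aeval_def] using hB)
  obtain ⟨u, rfl⟩ := hc
  obtain ⟨P, hP, hsum⟩ := div_prod_mem_partialFractions_of_span_eq_top
    (F := FractionRing (MvPolynomial (Fin d) K)) hbad Finset.univ (↑u⁻¹ * p)
  refine ⟨P, hP, ?_⟩
  rw [← hsum, hfac, map_mul, map_mul, map_units_inv, div_mul_eq_div_div, inv_mul_eq_div]

/-- **Nullstellensatz decomposition** (Lemma 3).
Let `q = c · q₁^{e₁} ⋯ q_m^{e_m}` be the factorization of `q ≠ 0` into a unit and
pairwise non-associate irreducibles.  Then `p/q` can be written as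
`Σ_A p_A / ∏_{i∈A} q_i^{e_i}`, the sum over subsets `A ⊆ {1,…,m}` such that the
`q_i`, `i ∈ A`, have a common zero in `K̄^d`. -/
theorem nullstellensatz_decomposition {K : Type*} [Field K] {d m : ℕ} (hd : 1 ≤ d)
    (p q : MvPolynomial (Fin d) K) (hq : q ≠ 0)
    (c : MvPolynomial (Fin d) K) (hc : IsUnit c)
    (qi : Fin m → MvPolynomial (Fin d) K) (e : Fin m → ℕ)
    (hirr : ∀ i, Irreducible (qi i)) (he : ∀ i, 0 < e i)
    (hassoc : ∀ i j, i ≠ j → ¬ Associated (qi i) (qi j))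
    (hfac : q = c * ∏ i, qi i ^ e i) :
    ∃ P : Finset (Fin m) → MvPolynomial (Fin d) K,
      (∀ A, P A ≠ 0 →
        ∃ x : Fin d → AlgebraicClosure K, ∀ i ∈ A,
          MvPolynomial.eval x
            (MvPolynomial.map (algebraMap K (AlgebraicClosure K)) (qi i)) = 0) ∧
      algebraMap (MvPolynomial (Fin d) K) (FractionRing (MvPolynomial (Fin d) K)) p /
          algebraMap (MvPolynomial (Fin d) K) (FractionRing (MvPolynomial (Fin d) K)) q =
        ∑ A : Finset (Fin m),
          algebraMap (MvPolynomial (Fin d) K) (FractionRing (MvPolynomial (Fin d) K)) (P A) /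
            algebraMap (MvPolynomial (Fin d) K) (FractionRing (MvPolynomial (Fin d) K))
              (∏ i ∈ A, qi i ^ e i) :=
  nullstellensatz_decomposition_general p q c hc qi e hfac
end

section
/- Let K be a field, d ≥ 1, and let q₁,…,q_m ∈ K[X₁,…,X_d]. Then the family (q₁,…,q_m) is algebraically dependent over K if and only if for all positive integers e₁,…,e_m the family (q₁^{e₁},…,q_m^{e_m}) is algebraically dependent over K. -/
/-!
Substituting `Xᵢ ↦ Xᵢ ^ eᵢ` makes the polynomial ring integral over the image of the substitution,
each `Xᵢ` being a root of `T ^ eᵢ - Xᵢ ^ eᵢ`. In an integral extension of domains a nonzero ideal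
meets the base ring nontrivially; applied to the kernel of evaluation at `x`, this turns a relation
among the `xᵢ` into one among the `xᵢ ^ eᵢ`.
-/

open MvPolynomial

namespace MvPolynomial

variable (R : Type*) {σ : Type*} [CommRing R]

noncomputable def expandPow (e : σ → ℕ) : MvPolynomial σ R →ₐ[R] MvPolynomial σ R :=
  aeval fun i => X i ^ e i

@[simp]
theorem expandPow_X (e : σ → ℕ) (i : σ) : expandPow R e (X i) = X i ^ e i :=
  aeval_X _ _

variable {R}

theorem aeval_comp_expandPow {A : Type*} [CommRing A] [Algebra R A] (x : σ → A) (e : σ → ℕ) :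
    (aeval x).comp (expandPow R e) = aeval fun i => x i ^ e i :=
  algHom_ext fun i => by simp

variable {e : σ → ℕ}

theorem isIntegral_X_range_expandPow (he : ∀ i, e i ≠ 0) (i : σ) :
    IsIntegral (expandPow R e).range (X i : MvPolynomial σ R) := by
  let c : (expandPow R e).range := ⟨X i ^ e i, X i, expandPow_X R e i⟩
  exact ⟨Polynomial.X ^ e i - Polynomial.C c, Polynomial.monic_X_pow_sub_C c (he i), by simp [c]⟩

theorem isIntegral_range_expandPow (he : ∀ i, e i ≠ 0) :
    Algebra.IsIntegral (expandPow R e).range (MvPolynomial σ R) := by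
  refine ⟨fun p => p.induction_on (fun a => ?_) (fun _ _ hp hq => hp.add hq)
    (fun _ i hp => hp.mul (isIntegral_X_range_expandPow he i))⟩
  rw [← algebraMap_eq, IsScalarTower.algebraMap_apply R (expandPow R e).range]
  exact isIntegral_algebraMap

end MvPolynomial

theorem AlgebraicIndependent.of_pow_s5 {K A ι : Type*} [CommRing K] [IsDomain K] [CommRing A]
    [Algebra K A] {x : ι → A} {e : ι → ℕ} (he : ∀ i, e i ≠ 0)
    (h : AlgebraicIndependent K fun i => x i ^ e i) : AlgebraicIndependent K x := by
  have : Algebra.IsIntegral (expandPow K e).range (MvPolynomial ι K) :=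
    isIntegral_range_expandPow he
  rw [algebraicIndependent_iff_ker_eq_bot] at h ⊢
  refine Ideal.IsIntegral.eq_bot_of_comap_eq_bot (expandPow K e).range (eq_bot_iff.2 ?_)
  rintro ⟨_, p, rfl⟩ hp
  have hp_ker : p ∈ RingHom.ker (aeval fun i => x i ^ e i).toRingHom := by
    rwa [← aeval_comp_expandPow]
  rw [h, Ideal.mem_bot] at hp_ker
  subst hp_ker
  exact Subtype.ext (map_zero _)

theorem algebraicDependent_iff_powers_algebraicDependent_general
    {K : Type*} [Field K] {d m : ℕ}
    (q : Fin m → MvPolynomial (Fin d) K) :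
    ¬ AlgebraicIndependent K q ↔
      ∀ e : Fin m → ℕ, (∀ i, 0 < e i) →
        ¬ AlgebraicIndependent K (fun i => q i ^ e i) :=
  ⟨fun hq e he hqe => hq (hqe.of_pow_s5 fun i => (he i).ne'),
    fun h => by simpa using h 1 fun _ => one_pos⟩

/-- **Lemma 5** (Leĭnartas's Lemma 1).
A finite family `(q₁,…,q_m)` of polynomials in `K[X₁,…,X_d]` is algebraically
dependent over `K` iff for all positive integers `e₁,…,e_m` the family
`(q₁^{e₁},…,q_m^{e_m})` is algebraically dependent over `K`. -/
theorem algebraicDependent_iff_powers_algebraicDependent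
    {K : Type*} [Field K] {d m : ℕ} (hd : 1 ≤ d)
    (q : Fin m → MvPolynomial (Fin d) K) :
    ¬ AlgebraicIndependent K q ↔
      ∀ e : Fin m → ℕ, (∀ i, 0 < e i) →
        ¬ AlgebraicIndependent K (fun i => q i ^ e i) :=
  algebraicDependent_iff_powers_algebraicDependent_general q
end

section
/- Let K be a field, let d ≥ 1 and 1 ≤ m ≤ d. The rational function f = 1/(X₁X₂⋯X_m) ∈ K(X₁,…,X_d) cannot be written as a finite sum Σ_j p_j/d_j with p_j, d_j ∈ K[X₁,…,X_d], d_j ≠ 0, where every denominator d_j is a monomial in fewer than m of the variables X₁,…,X_m. -/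
open MvPolynomial Finset

/-- **Remark.** For `1 ≤ m ≤ d`, the rational function `1/(X₁ ⋯ X_m)` cannot be
written as a finite sum of fractions `p_j/d_j` where each denominator `d_j` is a
monomial in fewer than `m` of the variables `X₁,…,X_m`. -/
theorem no_further_decomposition {K : Type*} [Field K] {d m : ℕ}
    (hd : 1 ≤ d) (hm : 1 ≤ m) (hmd : m ≤ d) :
    ¬ ∃ (n : ℕ) (p den : Fin n → MvPolynomial (Fin d) K),
        (∀ j, ∃ S : Finset (Fin d), (∀ i ∈ S, (i : ℕ) < m) ∧ S.card < m ∧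
          ∃ c : Fin d → ℕ, den j = ∏ i ∈ S, MvPolynomial.X i ^ c i) ∧
        algebraMap (MvPolynomial (Fin d) K) (FractionRing (MvPolynomial (Fin d) K)) 1 /
            algebraMap (MvPolynomial (Fin d) K) (FractionRing (MvPolynomial (Fin d) K))
              (∏ i ∈ Finset.univ.filter (fun i : Fin d => (i : ℕ) < m), MvPolynomial.X i) =
          ∑ j, algebraMap (MvPolynomial (Fin d) K) (FractionRing (MvPolynomial (Fin d) K)) (p j) /
              algebraMap (MvPolynomial (Fin d) K) (FractionRing (MvPolynomial (Fin d) K)) (den j) := by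
  classical
  rintro ⟨n, p, den, hden, heq⟩
  choose S hSlt hScard c hc using hden
  set φ : MvPolynomial (Fin d) K →+* FractionRing (MvPolynomial (Fin d) K) :=
    (algebraMap (MvPolynomial (Fin d) K) (FractionRing (MvPolynomial (Fin d) K))) with hφ
  set T : Finset (Fin d) := Finset.univ.filter (fun i : Fin d => (i : ℕ) < m) with hT
  have hTcard : T.card = m := by
    have : T = Finset.map (Fin.castLEEmb hmd) Finset.univ := by
      ext i
      simp only [hT, Finset.mem_filter, Finset.mem_univ, true_and, Finset.mem_map,
        Fin.castLEEmb_apply]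
      constructor
      · intro h; exact ⟨⟨(i : ℕ), h⟩, by ext; simp⟩
      · rintro ⟨a, rfl⟩; simpa using a.isLt
    rw [this, Finset.card_map, Finset.card_univ, Fintype.card_fin]
  set P : MvPolynomial (Fin d) K := ∏ i ∈ T, MvPolynomial.X i with hP
  -- monomial descriptions
  set e : Fin n → (Fin d →₀ ℕ) := fun j => ∑ i ∈ S j, Finsupp.single i (c j i) with he
  have hden_mon : ∀ j, den j = monomial (e j) (1 : K) := by
    intro j
    rw [hc j, he]
    rw [monomial_sum_one]
    exact Finset.prod_congr rfl fun i _ => X_pow_eq_monomial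
  have hej : ∀ j i, i ∉ S j → e j i = 0 := by
    intro j i hi
    rw [he]
    simp only [Finsupp.finset_sum_apply]
    exact Finset.sum_eq_zero fun k hk => Finsupp.single_eq_of_ne (fun h => hi (h ▸ hk))
  have hden_ne : ∀ j, den j ≠ 0 := by
    intro j
    rw [hden_mon j]
    simpa using (one_ne_zero : (1 : K) ≠ 0)
  have hP_ne : P ≠ 0 := by
    rw [hP]
    exact Finset.prod_ne_zero_iff.mpr fun i _ => X_ne_zero i
  have hφinj : Function.Injective φ := IsFractionRing.injective (MvPolynomial (Fin d) K) (FractionRing (MvPolynomial (Fin d) K))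
  have hφden : ∀ j, φ (den j) ≠ 0 := fun j h => hden_ne j (hφinj (by simpa using h))
  have hφP : φ P ≠ 0 := fun h => hP_ne (hφinj (by simpa using h))
  -- polynomial identity
  have key : (∏ k, den k) = ∑ j, p j * P * ∏ k ∈ Finset.univ.erase j, den k := by
    apply hφinj
    rw [map_sum, map_prod]
    have h1 : ∀ j : Fin n, φ (p j * P * ∏ k ∈ Finset.univ.erase j, den k)
        = (φ (p j) / φ (den j)) * (φ P * ∏ k, φ (den k)) := by
      intro j
      rw [map_mul, map_mul, map_prod,
        ← Finset.mul_prod_erase Finset.univ (fun k => φ (den k)) (Finset.mem_univ j)]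
      rw [div_mul_eq_mul_div, eq_div_iff (hφden j)]
      rw [map_prod]
      ring
    simp_rw [h1]
    rw [← Finset.sum_mul, ← heq, map_one]
    field_simp
  -- coefficient extraction
  set E : Fin d →₀ ℕ := ∑ k, e k with hE
  have hLHS : MvPolynomial.coeff E (∏ k, den k) = 1 := by
    have : (∏ k, den k) = monomial E (1 : K) := by
      rw [monomial_sum_one]
      exact Finset.prod_congr rfl fun k _ => hden_mon k
    rw [this, coeff_monomial, if_pos rfl]
  have hRHS : ∀ j : Fin n,
      MvPolynomial.coeff E (p j * P * ∏ k ∈ Finset.univ.erase j, den k) = 0 := by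
    intro j
    -- choose missing index
    have hsub : S j ⊆ T := fun i hi => by
      simp only [hT, Finset.mem_filter, Finset.mem_univ, true_and]; exact hSlt j i hi
    have hss : S j ⊂ T := hsub.ssubset_of_ne (fun h => by
      have hcard := hScard j
      rw [h, hTcard] at hcard
      exact lt_irrefl m hcard)
    obtain ⟨i, hiT, hiS⟩ := Finset.exists_of_ssubset hss
    set E' : Fin d →₀ ℕ := ∑ k ∈ Finset.univ.erase j, e k with hE'
    have hEsplit : E = e j + E' := by
      rw [hE, hE', ← Finset.add_sum_erase Finset.univ e (Finset.mem_univ j)]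
    have hE'i : E' i = E i := by
      rw [hEsplit]; simp [hej j i hiS]
    set Q : MvPolynomial (Fin d) K := ∏ i' ∈ T.erase i, MvPolynomial.X i' with hQ
    have hPsplit : P = MvPolynomial.X i * Q := by
      rw [hP, hQ, Finset.mul_prod_erase T _ hiT]
    have hprod : (∏ k ∈ Finset.univ.erase j, den k) = monomial E' (1 : K) := by
      rw [hE', monomial_sum_one]
      exact Finset.prod_congr rfl fun k _ => hden_mon k
    have hterm : p j * P * ∏ k ∈ Finset.univ.erase j, den k
        = monomial (Finsupp.single i 1 + E') (1 : K) * (p j * Q) := by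
      rw [hPsplit, hprod, monomial_single_add, pow_one]
      ring
    rw [hterm, coeff_monomial_mul', if_neg]
    intro hle
    have := hle i
    simp only [Finsupp.add_apply, Finsupp.single_eq_same] at this
    omega
    -- 1 + E' i ≤ E i = E' i, contradiction
  have := congrArg (MvPolynomial.coeff E) key
  rw [hLHS, coeff_sum] at this
  simp only [hRHS, Finset.sum_const_zero] at this
  exact one_ne_zero this
end
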